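/- Let B₁ and B₂ be n×n real matrices. Suppose there exist an invertible n×n real matrix T, k×k real matrices B₁,₁ and B₂,₁ (with 1 ≤ k < n), (n−k)×(n−k) real matrices B₁,₂ and B₂,₂, and k×(n−k) real matrices B₁,₀ and B₂,₀ such that T B₁ T⁻¹ is the block upper triangular matrix with diagonal blocks B₁,₁ and B₁,₂ and upper-right block B₁,₀, and T B₂ T⁻¹ is the block upper triangular matrix with diagonal blocks B₂,₁ and B₂,₂ and upper-right block B₂,₀ (both with zero lower-left block). Then ρ({B₁, B₂}) = max( ρ({B₁,₁, B₂,₁}), ρ({B₁,₂, B₂,₂}) ). -/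

import Mathlib

/-- Spectral radius of a real square matrix: the largest absolute value of its
complex eigenvalues (elements of the spectrum of the complexified matrix). -/
noncomputable def specRad {n : ℕ} (A : Matrix (Fin n) (Fin n) ℝ) : ℝ :=
  sSup {r : ℝ | ∃ μ ∈ spectrum ℂ (A.map Complex.ofReal), r = ‖μ‖}

/-- The set 𝒜^j of all products A₁A₂⋯A_j of j matrices from 𝒜. -/
def prodSet {n : ℕ} (𝒜 : Set (Matrix (Fin n) (Fin n) ℝ)) (j : ℕ) :
    Set (Matrix (Fin n) (Fin n) ℝ) :=
  {A | ∃ f : Fin j → Matrix (Fin n) (Fin n) ℝ, (∀ i, f i ∈ 𝒜) ∧ A = (List.ofFn f).prod}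

/-- Joint spectral radius: ρ(𝒜) = limsup_{j→∞} (sup_{A ∈ 𝒜^j} ρ(A))^{1/j}. -/
noncomputable def jsr {n : ℕ} (𝒜 : Set (Matrix (Fin n) (Fin n) ℝ)) : ℝ :=
  Filter.limsup
    (fun j : ℕ => (sSup (specRad '' prodSet 𝒜 j)) ^ ((1 : ℝ) / j)) Filter.atTop

/-!
Every product of `B₁, B₂` of length `j` is conjugate by `T` to a block upper triangular matrix
whose diagonal blocks are the corresponding products of the `Bᵢ₁` and of the `Bᵢ₂`. Its
characteristic polynomial is the product of those of the diagonal blocks, so its spectral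
radius is the larger of theirs. Hence the supremum of spectral radii over words of length `j`
splits as a maximum; so does its `1/j`-th power, and, the sequences being nonnegative and
bounded, so does their `limsup`.
-/

open Matrix Filter Polynomial
open scoped NNReal

attribute [local instance] Matrix.linftyOpNormedRing Matrix.linftyOpNormedAlgebra

noncomputable def maxSpecRad {n : ℕ} (𝒜 : Set (Matrix (Fin n) (Fin n) ℝ)) (j : ℕ) : ℝ :=
  sSup (specRad '' prodSet 𝒜 j)

lemma jsr_eq_limsup {n : ℕ} (𝒜 : Set (Matrix (Fin n) (Fin n) ℝ)) :
    jsr 𝒜 = limsup (fun j : ℕ => maxSpecRad 𝒜 j ^ ((1 : ℝ) / j)) atTop :=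
  rfl

section SpectralRadius

variable {m : ℕ}

lemma specRad_eq_sSup_norm_image (A : Matrix (Fin m) (Fin m) ℝ) :
    specRad A = sSup (norm '' spectrum ℂ (A.map Complex.ofReal)) := by
  simp only [specRad, Set.image, eq_comm]

lemma specRad_nonneg (A : Matrix (Fin m) (Fin m) ℝ) : 0 ≤ specRad A :=
  Real.sSup_nonneg <| by rintro r ⟨μ, -, rfl⟩; exact norm_nonneg μ

lemma specRad_le_nnnorm [NeZero m] (A : Matrix (Fin m) (Fin m) ℝ) :
    specRad A ≤ ‖A.map Complex.ofReal‖₊ := by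
  rw [specRad_eq_sSup_norm_image]
  exact Real.sSup_le (by rintro r ⟨μ, hμ, rfl⟩; exact spectrum.norm_le_norm_of_mem hμ)
    (norm_nonneg _)

lemma mem_spectrum_map_ofReal_iff (A : Matrix (Fin m) (Fin m) ℝ) (z : ℂ) :
    z ∈ spectrum ℂ (A.map Complex.ofReal) ↔ (A.charpoly.map Complex.ofRealHom).IsRoot z := by
  rw [← charpoly_map, ← mem_spectrum_iff_isRoot_charpoly]
  rfl

lemma specRad_eq_max_of_charpoly_eq_mul {k l : ℕ} [NeZero k] [NeZero l]
    {A : Matrix (Fin m) (Fin m) ℝ} {P : Matrix (Fin k) (Fin k) ℝ} {Q : Matrix (Fin l) (Fin l) ℝ}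
    (h : A.charpoly = P.charpoly * Q.charpoly) :
    specRad A = max (specRad P) (specRad Q) := by
  have hspec : spectrum ℂ (A.map Complex.ofReal) =
      spectrum ℂ (P.map Complex.ofReal) ∪ spectrum ℂ (Q.map Complex.ofReal) := by
    ext z
    simp only [Set.mem_union, mem_spectrum_map_ofReal_iff, h, Polynomial.map_mul, root_mul]
  rw [specRad_eq_sSup_norm_image, specRad_eq_sSup_norm_image, specRad_eq_sSup_norm_image,
    hspec, Set.image_union]
  exact csSup_union ((finite_spectrum _).image _).bddAbove
    ((spectrum.nonempty_of_isAlgClosed_of_finiteDimensional ℂ _).image _)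
    ((finite_spectrum _).image _).bddAbove
    ((spectrum.nonempty_of_isAlgClosed_of_finiteDimensional ℂ _).image _)

lemma specRad_eq_max_of_conj_eq_fromBlocks {n k l : ℕ} [NeZero k] [NeZero l]
    (e : Fin k ⊕ Fin l ≃ Fin n) {T A : Matrix (Fin n) (Fin n) ℝ} (hT : IsUnit T)
    {P : Matrix (Fin k) (Fin k) ℝ} {C : Matrix (Fin k) (Fin l) ℝ} {Q : Matrix (Fin l) (Fin l) ℝ}
    (h : T * A * T⁻¹ = reindex e e (fromBlocks P C 0 Q)) :
    specRad A = max (specRad P) (specRad Q) := by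
  refine specRad_eq_max_of_charpoly_eq_mul ?_
  have hconj := charpoly_units_conj hT.unit A
  rwa [hT.unit_spec, h, charpoly_reindex, charpoly_fromBlocks_zero₂₁, eq_comm]
    at hconj

end SpectralRadius

section Products

variable {ι R : Type*}

lemma conj_list_prod {n : Type*} [Fintype n] [DecidableEq n] [CommRing R]
    {T : Matrix n n R} (hT : IsUnit T) (L : List (Matrix n n R)) :
    T * L.prod * T⁻¹ = (L.map fun A => T * A * T⁻¹).prod := by
  induction L with
  | nil => simpa using mul_nonsing_inv T ((isUnit_iff_isUnit_det T).mp hT)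
  | cons A L ih =>
    rw [List.map_cons, List.prod_cons, List.prod_cons, ← ih]
    simp only [Matrix.mul_assoc, nonsing_inv_mul_cancel_left _ _ ((isUnit_iff_isUnit_det T).mp hT)]

lemma exists_list_prod_fromBlocks_zero₂₁ {l m : Type*} [Fintype l] [Fintype m]
    [DecidableEq l] [DecidableEq m] [Semiring R]
    (P : ι → Matrix l l R) (C : ι → Matrix l m R) (Q : ι → Matrix m m R) (w : List ι) :
    ∃ C', (w.map fun i => fromBlocks (P i) (C i) 0 (Q i)).prod =
      fromBlocks (w.map P).prod C' 0 (w.map Q).prod := by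
  induction w with
  | nil => exact ⟨0, fromBlocks_one.symm⟩
  | cons i w ih =>
    obtain ⟨C', hC'⟩ := ih
    exact ⟨P i * C' + C i * (w.map Q).prod, by simp [hC', fromBlocks_multiply]⟩

lemma specRad_list_prod_eq_max {n k l : ℕ} [NeZero k] [NeZero l]
    (e : Fin k ⊕ Fin l ≃ Fin n) {T : Matrix (Fin n) (Fin n) ℝ} (hT : IsUnit T)
    {A : ι → Matrix (Fin n) (Fin n) ℝ} {P : ι → Matrix (Fin k) (Fin k) ℝ}
    {C : ι → Matrix (Fin k) (Fin l) ℝ} {Q : ι → Matrix (Fin l) (Fin l) ℝ}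
    (h : ∀ i, T * A i * T⁻¹ = reindex e e (fromBlocks (P i) (C i) 0 (Q i))) (w : List ι) :
    specRad (w.map A).prod = max (specRad (w.map P).prod) (specRad (w.map Q).prod) := by
  obtain ⟨C', hC'⟩ := exists_list_prod_fromBlocks_zero₂₁ P C Q w
  refine specRad_eq_max_of_conj_eq_fromBlocks e hT (C := C') ?_
  calc T * (w.map A).prod * T⁻¹
      = (w.map fun i => reindexAlgEquiv ℝ ℝ e (fromBlocks (P i) (C i) 0 (Q i))).prod := by
        simp only [conj_list_prod hT, List.map_map, Function.comp_def, h, coe_reindexAlgEquiv]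
    _ = reindex e e (fromBlocks (w.map P).prod C' 0 (w.map Q).prod) := by
        rw [← hC', ← coe_reindexAlgEquiv ℝ ℝ, map_list_prod, List.map_map]
        rfl

lemma prodSet_range {n : ℕ} (A : ι → Matrix (Fin n) (Fin n) ℝ) (j : ℕ) :
    prodSet (Set.range A) j = Set.range fun w : Fin j → ι => ((List.ofFn w).map A).prod := by
  ext M
  constructor
  · rintro ⟨f, hf, rfl⟩
    choose w hw using hf
    exact ⟨w, by dsimp only; rw [List.map_ofFn]; exact congrArg _ (congrArg _ (funext hw))⟩
  · rintro ⟨w, rfl⟩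
    exact ⟨A ∘ w, fun i => ⟨w i, rfl⟩, by dsimp only; rw [List.map_ofFn]⟩

lemma maxSpecRad_range_eq_max [Finite ι] {n k l : ℕ} [NeZero k] [NeZero l]
    (e : Fin k ⊕ Fin l ≃ Fin n) {T : Matrix (Fin n) (Fin n) ℝ} (hT : IsUnit T)
    {A : ι → Matrix (Fin n) (Fin n) ℝ} {P : ι → Matrix (Fin k) (Fin k) ℝ}
    {C : ι → Matrix (Fin k) (Fin l) ℝ} {Q : ι → Matrix (Fin l) (Fin l) ℝ}
    (h : ∀ i, T * A i * T⁻¹ = reindex e e (fromBlocks (P i) (C i) 0 (Q i))) (j : ℕ) :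
    maxSpecRad (Set.range A) j = max (maxSpecRad (Set.range P) j) (maxSpecRad (Set.range Q) j) := by
  simp only [maxSpecRad, prodSet_range, ← Set.range_comp]
  change ⨆ w, _ = (⨆ w, _) ⊔ (⨆ w, _)
  simp only [Function.comp_apply, specRad_list_prod_eq_max e hT h]
  exact ciSup_sup_eq (Set.finite_range _).bddAbove (Set.finite_range _).bddAbove

end Products

section Limsup

variable {m : ℕ}

lemma maxSpecRad_nonneg (𝒜 : Set (Matrix (Fin m) (Fin m) ℝ)) (j : ℕ) :
    0 ≤ maxSpecRad 𝒜 j :=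
  Real.sSup_nonneg <| by rintro r ⟨A, -, rfl⟩; exact specRad_nonneg A

lemma maxSpecRad_le_pow [NeZero m] {𝒜 : Set (Matrix (Fin m) (Fin m) ℝ)} {c : ℝ≥0}
    (hc : ∀ A ∈ 𝒜, ‖A.map Complex.ofReal‖₊ ≤ c) (j : ℕ) :
    maxSpecRad 𝒜 j ≤ c ^ j := by
  refine Real.sSup_le ?_ (by positivity)
  rintro r ⟨M, ⟨f, hf, rfl⟩, rfl⟩
  refine (specRad_le_nnnorm _).trans ?_
  rw [← NNReal.coe_pow, NNReal.coe_le_coe]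
  calc ‖((List.ofFn f).prod).map Complex.ofReal‖₊
      = ‖((List.ofFn f).map Complex.ofRealHom.mapMatrix).prod‖₊ := by
        rw [← map_list_prod]; rfl
    _ ≤ (((List.ofFn f).map Complex.ofRealHom.mapMatrix).map nnnorm).prod := List.nnnorm_prod_le _
    _ ≤ c ^ j := by
        refine (List.prod_le_pow_card _ c ?_).trans_eq (by simp)
        simp only [List.map_map, List.mem_map, List.mem_ofFn]
        rintro _ ⟨_, ⟨i, rfl⟩, rfl⟩
        exact hc _ (hf i)

lemma isBoundedUnder_maxSpecRad_rpow [NeZero m] {𝒜 : Set (Matrix (Fin m) (Fin m) ℝ)}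
    (h𝒜 : 𝒜.Finite) :
    IsBoundedUnder (· ≤ ·) atTop fun j : ℕ => maxSpecRad 𝒜 j ^ ((1 : ℝ) / j) := by
  obtain ⟨c, hc⟩ := (h𝒜.image fun A => ‖A.map Complex.ofReal‖₊).bddAbove
  refine ⟨c, (eventually_ne_atTop 0).mono fun j hj => ?_⟩
  calc maxSpecRad 𝒜 j ^ ((1 : ℝ) / j)
      ≤ ((c : ℝ) ^ j) ^ ((j : ℝ)⁻¹) := by
        rw [one_div]
        exact Real.rpow_le_rpow (maxSpecRad_nonneg 𝒜 j)
          (maxSpecRad_le_pow (fun A hA => hc ⟨A, hA, rfl⟩) j) (by positivity)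
    _ = c := Real.pow_rpow_inv_natCast c.2 hj

lemma jsr_eq_max_of_maxSpecRad_eq_max {n k l : ℕ} [NeZero k] [NeZero l]
    {𝒜 : Set (Matrix (Fin n) (Fin n) ℝ)} {ℬ : Set (Matrix (Fin k) (Fin k) ℝ)}
    {𝒞 : Set (Matrix (Fin l) (Fin l) ℝ)} (hℬ : ℬ.Finite) (h𝒞 : 𝒞.Finite)
    (h : ∀ j, maxSpecRad 𝒜 j = max (maxSpecRad ℬ j) (maxSpecRad 𝒞 j)) :
    jsr 𝒜 = max (jsr ℬ) (jsr 𝒞) := by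
  have hrpow : ∀ j : ℕ, maxSpecRad 𝒜 j ^ ((1 : ℝ) / j) =
      max (maxSpecRad ℬ j ^ ((1 : ℝ) / j)) (maxSpecRad 𝒞 j ^ ((1 : ℝ) / j)) := fun j => by
    rw [h j]
    exact (Real.monotoneOn_rpow_Ici_of_exponent_nonneg (by positivity)).map_max
      (maxSpecRad_nonneg ℬ j) (maxSpecRad_nonneg 𝒞 j)
  have hcobdd {p : ℕ} (𝒟 : Set (Matrix (Fin p) (Fin p) ℝ)) :
      IsCoboundedUnder (· ≤ ·) atTop fun j : ℕ => maxSpecRad 𝒟 j ^ ((1 : ℝ) / j) :=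
    isCoboundedUnder_le_of_le atTop fun j => Real.rpow_nonneg (maxSpecRad_nonneg 𝒟 j) _
  rw [jsr_eq_limsup, jsr_eq_limsup, jsr_eq_limsup, funext hrpow]
  exact limsup_max (hcobdd ℬ) (hcobdd 𝒞) (isBoundedUnder_maxSpecRad_rpow hℬ)
    (isBoundedUnder_maxSpecRad_rpow h𝒞)

end Limsup

theorem jsr_range_eq_max_of_conj_eq_fromBlocks {ι : Type*} [Finite ι] {n k l : ℕ}
    [NeZero k] [NeZero l] (e : Fin k ⊕ Fin l ≃ Fin n) {T : Matrix (Fin n) (Fin n) ℝ}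
    (hT : IsUnit T) {A : ι → Matrix (Fin n) (Fin n) ℝ} {P : ι → Matrix (Fin k) (Fin k) ℝ}
    {C : ι → Matrix (Fin k) (Fin l) ℝ} {Q : ι → Matrix (Fin l) (Fin l) ℝ}
    (h : ∀ i, T * A i * T⁻¹ = reindex e e (fromBlocks (P i) (C i) 0 (Q i))) :
    jsr (Set.range A) = max (jsr (Set.range P)) (jsr (Set.range Q)) :=
  jsr_eq_max_of_maxSpecRad_eq_max (Set.finite_range P) (Set.finite_range Q)
    (maxSpecRad_range_eq_max e hT h)

/-- Reducibility: if T B₁ T⁻¹ and T B₂ T⁻¹ are block upper triangular with the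
same block structure, the JSR of {B₁, B₂} equals the maximum of the JSRs of the
sets of corresponding diagonal blocks. -/
theorem jsr_reducible {n k : ℕ} (hk1 : 1 ≤ k) (hkn : k < n)
    (B₁ B₂ T : Matrix (Fin n) (Fin n) ℝ) (hT : IsUnit T)
    (B₁₁ B₂₁ : Matrix (Fin k) (Fin k) ℝ)
    (B₁₂ B₂₂ : Matrix (Fin (n - k)) (Fin (n - k)) ℝ)
    (B₁₀ B₂₀ : Matrix (Fin k) (Fin (n - k)) ℝ)
    (h₁ : T * B₁ * T⁻¹ =
      Matrix.reindex (finSumFinEquiv.trans (finCongr (Nat.add_sub_cancel' hkn.le)))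
        (finSumFinEquiv.trans (finCongr (Nat.add_sub_cancel' hkn.le)))
        (Matrix.fromBlocks B₁₁ B₁₀ 0 B₁₂))
    (h₂ : T * B₂ * T⁻¹ =
      Matrix.reindex (finSumFinEquiv.trans (finCongr (Nat.add_sub_cancel' hkn.le)))
        (finSumFinEquiv.trans (finCongr (Nat.add_sub_cancel' hkn.le)))
        (Matrix.fromBlocks B₂₁ B₂₀ 0 B₂₂)) :
    jsr {B₁, B₂} = max (jsr {B₁₁, B₂₁}) (jsr {B₁₂, B₂₂}) := by
  have : NeZero k := ⟨by omega⟩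
  have : NeZero (n - k) := ⟨by omega⟩
  have h : ∀ i : Fin 2, T * ![B₁, B₂] i * T⁻¹ =
      reindex (finSumFinEquiv.trans (finCongr (Nat.add_sub_cancel' hkn.le)))
        (finSumFinEquiv.trans (finCongr (Nat.add_sub_cancel' hkn.le)))
        (fromBlocks (![B₁₁, B₂₁] i) (![B₁₀, B₂₀] i) 0 (![B₁₂, B₂₂] i)) :=
    Fin.forall_fin_two.2 ⟨h₁, h₂⟩
  simpa only [range_cons_cons_empty] using jsr_range_eq_max_of_conj_eq_fromBlocks _ hT h
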